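/- Let (uₙ) be a sequence in H^s_0(Ω) such that ‖uₙ‖_q ≤ C for some q with (p−2)N/(2s) < q < p < 2*_s, and such that ‖uₙ‖² ≤ C(1 + ‖uₙ‖₁ + ‖uₙ‖_p^p) for all n. Then (uₙ) is bounded in H^s_0(Ω). -/

import Mathlib

open MeasureTheory

/-- The Gagliardo bilinear form. -/
noncomputable def gform (N : ℕ) (s : ℝ) (u v : EuclideanSpace ℝ (Fin N) → ℝ) : ℝ :=
  ∫ z : EuclideanSpace ℝ (Fin N) × EuclideanSpace ℝ (Fin N),
    ((u z.1 - u z.2) * (v z.1 - v z.2)) / ‖z.1 - z.2‖ ^ ((N : ℝ) + 2 * s)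

/-- Membership in the fractional Sobolev space `H^s_0(Ω)`. -/
def MemHs0 (N : ℕ) (s : ℝ) (Ω : Set (EuclideanSpace ℝ (Fin N)))
    (u : EuclideanSpace ℝ (Fin N) → ℝ) : Prop :=
  MemLp u 2 (volume : Measure (EuclideanSpace ℝ (Fin N))) ∧
  (∀ᵐ x ∂(volume : Measure (EuclideanSpace ℝ (Fin N))), x ∉ Ω → u x = 0) ∧
  Integrable (fun z : EuclideanSpace ℝ (Fin N) × EuclideanSpace ℝ (Fin N) =>
    (u z.1 - u z.2) ^ 2 / ‖z.1 - z.2‖ ^ ((N : ℝ) + 2 * s)) volume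

/-- The `L^r(Ω)` norm. -/
noncomputable def lnorm (N : ℕ) (Ω : Set (EuclideanSpace ℝ (Fin N))) (r : ℝ)
    (u : EuclideanSpace ℝ (Fin N) → ℝ) : ℝ :=
  (∫ x in Ω, |u x| ^ r) ^ (1 / r)

/-! Write `X = √(gform u u)` for the Gagliardo seminorm. Interpolating `L^p` between `L^q` and
`L^{2*_s}` and using the embeddings gives `‖u‖_p^p ≤ ‖u‖_q^{p(1-τ)} ‖u‖_{2*_s}^{pτ} ≤ K X^{pτ}` and
`‖u‖_1 ≤ K X`, so `X² ≤ K (1 + X + X^{pτ})`. Since `pτ = 2*_s (p - q) / (2*_s - q)` is `< 2`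
exactly when `q > (p - 2) N / (2s)`, this bounds `X`.

`lnorm` is a Bochner integral, which is `0` for non-integrable functions, so the embedding gives no
information on `∫ |u|^{2*_s}` until that is known to be finite. It is therefore applied to the
bounded truncations `max (-k) (min k u)`, which stay in `H^s_0(Ω)` with smaller seminorm, and the
bound passes to `u` by Fatou's lemma. -/

open Filter
open scoped ENNReal

def truncate (k x : ℝ) : ℝ := max (-k) (min k x)

theorem lipschitzWith_truncate (k : ℝ) : LipschitzWith 1 (truncate k) :=
  (LipschitzWith.id.const_min k).const_max (-k)

theorem truncate_zero {k : ℝ} (hk : 0 ≤ k) : truncate k 0 = 0 := by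
  simp [truncate, hk]

theorem abs_truncate_le {k : ℝ} (hk : 0 ≤ k) (x : ℝ) : |truncate k x| ≤ k :=
  abs_le.2 ⟨le_max_left _ _, max_le (by linarith) (min_le_left _ _)⟩

theorem truncate_eq_self {k x : ℝ} (h : |x| ≤ k) : truncate k x = x := by
  obtain ⟨h₁, h₂⟩ := abs_le.1 h
  simp [truncate, h₁, h₂]

theorem eventually_truncate_eq (x : ℝ) : ∀ᶠ k : ℕ in atTop, truncate k x = x :=
  eventually_atTop.2 ⟨⌈|x|⌉₊, fun _ hk => truncate_eq_self ((Nat.le_ceil _).trans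
    (Nat.cast_le.2 hk))⟩

theorem sq_sub_le_of_lipschitzWith_one {φ : ℝ → ℝ} (hφ : LipschitzWith 1 φ) (a b : ℝ) :
    (φ a - φ b) ^ 2 ≤ (a - b) ^ 2 :=
  sq_le_sq.2 (by simpa [Real.dist_eq] using hφ.dist_le_mul a b)

section Lebesgue

variable {α : Type*} [MeasurableSpace α] {μ : Measure α}

theorem lintegral_rpow_le_interpolate {g : α → ℝ≥0∞} (hg : AEMeasurable g μ) {p q r : ℝ}
    (hq : 0 ≤ q) (hqp : q ≤ p) (hpr : p ≤ r) (hqr : q < r) :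
    ∫⁻ x, g x ^ p ∂μ ≤
      (∫⁻ x, g x ^ q ∂μ) ^ ((r - p) / (r - q)) * (∫⁻ x, g x ^ r ∂μ) ^ ((p - q) / (r - q)) := by
  have hrq : 0 < r - q := sub_pos.2 hqr
  have hθ : 0 ≤ (r - p) / (r - q) := div_nonneg (by linarith) hrq.le
  have hθ' : 0 ≤ (p - q) / (r - q) := div_nonneg (by linarith) hrq.le
  have hp : p = q * ((r - p) / (r - q)) + r * ((p - q) / (r - q)) := by
    field_simp; ring
  calc ∫⁻ x, g x ^ p ∂μ
      = ∫⁻ x, (g x ^ q) ^ ((r - p) / (r - q)) * (g x ^ r) ^ ((p - q) / (r - q)) ∂μ := by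
        refine lintegral_congr fun x => ?_
        rw [← ENNReal.rpow_mul, ← ENNReal.rpow_mul,
          ← ENNReal.rpow_add_of_nonneg _ _ (mul_nonneg hq hθ) (mul_nonneg (hq.trans hqr.le) hθ'),
          ← hp]
    _ ≤ _ := ENNReal.lintegral_mul_norm_pow_le (hg.pow_const q) (hg.pow_const r) hθ hθ'
        (by field_simp; ring)

theorem lintegral_rpow_ne_top_of_le [IsFiniteMeasure μ] {g : α → ℝ≥0∞} {q r : ℝ}
    (hq : 0 ≤ q) (hqr : q ≤ r) (h : ∫⁻ x, g x ^ r ∂μ ≠ ∞) : ∫⁻ x, g x ^ q ∂μ ≠ ∞ := by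
  have hle : ∀ x, g x ^ q ≤ 1 + g x ^ r := fun x => by
    rcases le_total (g x) 1 with hx | hx
    · exact (ENNReal.rpow_le_one hx hq).trans le_self_add
    · exact (ENNReal.rpow_le_rpow_of_exponent_le hx hqr).trans le_add_self
  refine ne_top_of_le_ne_top ?_ (lintegral_mono hle)
  rw [lintegral_add_left measurable_const]
  exact ENNReal.add_ne_top.2 ⟨by simp, h⟩

theorem lintegral_enorm_rpow_le_of_truncate {u : α → ℝ} (hu : AEMeasurable u μ) {r : ℝ}
    {B : ℝ≥0∞} (h : ∀ k : ℕ, ∫⁻ x, ‖truncate k (u x)‖ₑ ^ r ∂μ ≤ B) : ∫⁻ x, ‖u x‖ₑ ^ r ∂μ ≤ B := by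
  have hlim : ∀ x, liminf (fun k : ℕ => ‖truncate k (u x)‖ₑ ^ r) atTop = ‖u x‖ₑ ^ r :=
    fun x => (tendsto_const_nhds.congr' ((eventually_truncate_eq (u x)).mono
      fun k hk => by rw [hk])).liminf_eq
  calc ∫⁻ x, ‖u x‖ₑ ^ r ∂μ
      = ∫⁻ x, liminf (fun k : ℕ => ‖truncate k (u x)‖ₑ ^ r) atTop ∂μ := by
        simp only [hlim]
    _ ≤ liminf (fun k : ℕ => ∫⁻ x, ‖truncate k (u x)‖ₑ ^ r ∂μ) atTop :=
        lintegral_liminf_le' fun k =>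
          ((lipschitzWith_truncate k).continuous.measurable.comp_aemeasurable hu).enorm.pow_const r
    _ ≤ B := liminf_le_of_frequently_le' (Frequently.of_forall h)

end Lebesgue

section FractionalSobolev

variable {N : ℕ} {s : ℝ} {Ω : Set (EuclideanSpace ℝ (Fin N))} {u : EuclideanSpace ℝ (Fin N) → ℝ}

theorem MemHs0.comp_lipschitzWith (hu : MemHs0 N s Ω u) {φ : ℝ → ℝ} (hφ : LipschitzWith 1 φ)
    (hφ0 : φ 0 = 0) : MemHs0 N s Ω (fun x => φ (u x)) := by
  obtain ⟨hu2, hu0, huG⟩ := hu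
  have hφu : AEStronglyMeasurable (fun x => φ (u x)) volume :=
    hφ.continuous.comp_aestronglyMeasurable hu2.1
  refine ⟨hφ.comp_memLp hφ0 hu2, ?_, huG.mono' ?_ ?_⟩
  · filter_upwards [hu0] with x hx hxΩ
    rw [hx hxΩ, hφ0]
  · rw [Measure.volume_eq_prod] at huG ⊢
    exact ((((hφu.comp_fst.sub hφu.comp_snd).aemeasurable.pow_const 2).div
      ((measurable_fst.sub measurable_snd).norm.pow_const _).aemeasurable)).aestronglyMeasurable
  · filter_upwards with z
    rw [Real.norm_of_nonneg (by positivity)]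
    gcongr ?_ / _
    exact sq_sub_le_of_lipschitzWith_one hφ _ _

theorem gform_self_nonneg : 0 ≤ gform N s u u :=
  integral_nonneg fun _ => div_nonneg (mul_self_nonneg _) (by positivity)

theorem gform_comp_le {φ : ℝ → ℝ} (hφ : LipschitzWith 1 φ) (hu : MemHs0 N s Ω u) :
    gform N s (fun x => φ (u x)) (fun x => φ (u x)) ≤ gform N s u u := by
  refine integral_mono_of_nonneg
    (Eventually.of_forall fun _ => div_nonneg (mul_self_nonneg _) (by positivity))
    (by simpa only [sq] using hu.2.2) (Eventually.of_forall fun z => ?_)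
  simp only [← sq]
  gcongr ?_ / _
  exact sq_sub_le_of_lipschitzWith_one hφ _ _

theorem lnorm_nonneg (r : ℝ) : 0 ≤ lnorm N Ω r u :=
  Real.rpow_nonneg (integral_nonneg fun _ => by positivity) _

theorem lnorm_rpow_eq_toReal_lintegral (hu : AEStronglyMeasurable u (volume.restrict Ω)) {r : ℝ}
    (hr : 0 < r) : lnorm N Ω r u ^ r = (∫⁻ x in Ω, ‖u x‖ₑ ^ r).toReal := by
  rw [lnorm, one_div, Real.rpow_inv_rpow (integral_nonneg fun _ => by positivity) hr.ne',
    integral_eq_lintegral_of_nonneg_ae (Eventually.of_forall fun _ => by positivity)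
      (hu.aemeasurable.abs.pow_const r).aestronglyMeasurable]
  congr 1
  refine lintegral_congr fun x => ?_
  rw [Real.enorm_eq_ofReal_abs, ENNReal.ofReal_rpow_of_nonneg (abs_nonneg _) hr.le]

theorem lintegral_enorm_rpow_le_of_lnorm_le (hu : AEStronglyMeasurable u (volume.restrict Ω))
    {r M : ℝ} (hr : 0 < r) (hfin : ∫⁻ x in Ω, ‖u x‖ₑ ^ r ≠ ∞) (h : lnorm N Ω r u ≤ M) :
    ∫⁻ x in Ω, ‖u x‖ₑ ^ r ≤ ENNReal.ofReal (M ^ r) := by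
  have hM : 0 ≤ M := (lnorm_nonneg r).trans h
  rw [ENNReal.le_ofReal_iff_toReal_le hfin (by positivity), ← lnorm_rpow_eq_toReal_lintegral hu hr]
  exact Real.rpow_le_rpow (lnorm_nonneg r) h hr.le

theorem lnorm_rpow_le_interpolate (hu : AEStronglyMeasurable u (volume.restrict Ω)) {p q r : ℝ}
    (hq : 0 < q) (hqp : q < p) (hpr : p < r) {A B : ℝ} (hA0 : 0 ≤ A) (hB0 : 0 ≤ B)
    (hA : ∫⁻ x in Ω, ‖u x‖ₑ ^ q ≤ ENNReal.ofReal (A ^ q))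
    (hB : ∫⁻ x in Ω, ‖u x‖ₑ ^ r ≤ ENNReal.ofReal (B ^ r)) :
    lnorm N Ω p u ^ p ≤ A ^ (q * (r - p) / (r - q)) * B ^ (r * (p - q) / (r - q)) := by
  have hrq : 0 < r - q := by linarith
  rw [lnorm_rpow_eq_toReal_lintegral hu (hq.trans hqp)]
  refine ENNReal.toReal_le_of_le_ofReal (by positivity) ?_
  calc ∫⁻ x in Ω, ‖u x‖ₑ ^ p
      ≤ (∫⁻ x in Ω, ‖u x‖ₑ ^ q) ^ ((r - p) / (r - q)) *
          (∫⁻ x in Ω, ‖u x‖ₑ ^ r) ^ ((p - q) / (r - q)) :=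
        lintegral_rpow_le_interpolate hu.enorm hq.le hqp.le hpr.le (hqp.trans hpr)
    _ ≤ ENNReal.ofReal (A ^ q) ^ ((r - p) / (r - q)) *
          ENNReal.ofReal (B ^ r) ^ ((p - q) / (r - q)) := by
        gcongr
    _ = _ := by
        rw [ENNReal.ofReal_rpow_of_nonneg (by positivity) (div_nonneg (by linarith) hrq.le),
          ENNReal.ofReal_rpow_of_nonneg (by positivity) (div_nonneg (by linarith) hrq.le),
          ← ENNReal.ofReal_mul (by positivity), ← Real.rpow_mul hA0, ← Real.rpow_mul hB0,
          mul_div_assoc, mul_div_assoc]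

theorem lintegral_enorm_rpow_le_of_embedding (hΩ : volume Ω ≠ ∞) {r S : ℝ} (hr : 0 < r)
    (hS : 0 ≤ S) (hemb : ∀ v, MemHs0 N s Ω v → lnorm N Ω r v ≤ S * √(gform N s v v))
    (hu : MemHs0 N s Ω u) :
    ∫⁻ x in Ω, ‖u x‖ₑ ^ r ≤ ENNReal.ofReal ((S * √(gform N s u u)) ^ r) := by
  refine lintegral_enorm_rpow_le_of_truncate hu.1.1.aemeasurable.restrict fun k => ?_
  have hk : (0 : ℝ) ≤ k := k.cast_nonneg
  have hv := hu.comp_lipschitzWith (lipschitzWith_truncate k) (truncate_zero hk)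
  have hfin : ∫⁻ x in Ω, ‖truncate k (u x)‖ₑ ^ r ≠ ∞ := by
    refine ne_top_of_le_ne_top (b := ENNReal.ofReal k ^ r * volume Ω)
      (ENNReal.mul_ne_top (by simp [hr.le]) hΩ) ?_
    rw [← setLIntegral_const]
    refine lintegral_mono fun x => ?_
    gcongr
    rw [Real.enorm_eq_ofReal_abs]
    exact ENNReal.ofReal_le_ofReal (abs_truncate_le hk _)
  refine lintegral_enorm_rpow_le_of_lnorm_le hv.1.1.restrict hr hfin ((hemb _ hv).trans ?_)
  gcongr
  exact gform_comp_le (lipschitzWith_truncate k) hu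

end FractionalSobolev

theorem exists_bound_of_sq_le {b : ℝ} (hb : b < 2) (A B D : ℝ) :
    ∃ M, ∀ X : ℝ, 0 ≤ X → X ^ 2 ≤ A + B * X + D * X ^ b → X ≤ M := by
  set m := max 1 b
  set K := |A| + |B| + |D|
  have hm : m < 2 := max_lt one_lt_two hb
  refine ⟨max 1 (K ^ (2 - m)⁻¹), fun X hX0 hX => ?_⟩
  rcases le_total X 1 with hX1 | hX1
  · exact hX1.trans (le_max_left _ _)
  have hXm : 1 ≤ X ^ m := Real.one_le_rpow hX1 (zero_le_one.trans (le_max_left _ _))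
  have hpow : X ^ 2 ≤ K * X ^ m := by
    have h₁ : X ≤ X ^ m := by
      simpa using Real.rpow_le_rpow_of_exponent_le hX1 (le_max_left 1 b)
    have h₂ : X ^ b ≤ X ^ m := Real.rpow_le_rpow_of_exponent_le hX1 (le_max_right 1 b)
    calc X ^ 2 ≤ A + B * X + D * X ^ b := hX
      _ ≤ |A| * X ^ m + |B| * X ^ m + |D| * X ^ m := by
        gcongr ?_ + ?_ + ?_
        · exact (le_abs_self A).trans (le_mul_of_one_le_right (abs_nonneg A) hXm)
        · exact (mul_le_mul_of_nonneg_right (le_abs_self B) hX0).trans (by gcongr)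
        · exact (mul_le_mul_of_nonneg_right (le_abs_self D) (by positivity)).trans (by gcongr)
      _ = K * X ^ m := by ring
  have hXK : X ^ (2 - m) ≤ K := by
    rw [Real.rpow_sub (by linarith), Real.rpow_two, div_le_iff₀ (by linarith)]
    exact_mod_cast hpow
  calc X = (X ^ (2 - m)) ^ (2 - m)⁻¹ := (Real.rpow_rpow_inv hX0 (by linarith)).symm
    _ ≤ K ^ (2 - m)⁻¹ := by gcongr
    _ ≤ _ := le_max_right _ _

theorem interpolation_exponent_lt_two {N s p q : ℝ} (hs : 0 < s) (hNs : 2 * s < N)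
    (hq : (p - 2) * N / (2 * s) < q) (hqr : q < 2 * N / (N - 2 * s)) :
    2 * N / (N - 2 * s) * (p - q) / (2 * N / (N - 2 * s) - q) < 2 := by
  set r := 2 * N / (N - 2 * s)
  have hNs' : 0 < N - 2 * s := by linarith
  have hr : r * (N - 2 * s) = 2 * N := div_mul_cancel₀ _ hNs'.ne'
  have hq' : (p - 2) * N < q * (2 * s) := (div_lt_iff₀ (by linarith)).1 hq
  have key : (r * (p - q) - 2 * (r - q)) * (N - 2 * s) = 2 * ((p - 2) * N - q * (2 * s)) := by
    linear_combination (p - q - 2) * hr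
  rw [div_lt_iff₀ (by linarith)]
  nlinarith [key]

theorem stmt_8_general (N : ℕ) (s : ℝ) (hs : s ∈ Set.Ioo (0 : ℝ) 1)
    (hNs : 2 * s < (N : ℝ))
    (Ω : Set (EuclideanSpace ℝ (Fin N))) (hΩ : Bornology.IsBounded Ω)
    (p q : ℝ) (hp2 : 2 < p) (hqlo : (p - 2) * (N : ℝ) / (2 * s) < q) (hqp : q < p)
    (hpc : p < 2 * (N : ℝ) / ((N : ℝ) - 2 * s))
    -- continuous embeddings H^s_0(Ω) ↪ L^r(Ω), 1 ≤ r ≤ 2*_s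
    (hemb : ∀ r : ℝ, 1 ≤ r → r ≤ 2 * (N : ℝ) / ((N : ℝ) - 2 * s) →
      ∃ S > (0 : ℝ), ∀ u : EuclideanSpace ℝ (Fin N) → ℝ, MemHs0 N s Ω u →
        lnorm N Ω r u ≤ S * Real.sqrt (gform N s u u))
    (U : ℕ → EuclideanSpace ℝ (Fin N) → ℝ) (hU : ∀ n, MemHs0 N s Ω (U n))
    (C : ℝ) (hC : 0 < C)
    -- (uₙ) bounded in L^q(Ω)
    (hLq : ∀ n, lnorm N Ω q (U n) ≤ C)
    -- ‖uₙ‖² ≤ C(1 + ‖uₙ‖₁ + ‖uₙ‖_p^p)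
    (hkey : ∀ n, gform N s (U n) (U n) ≤
      C * (1 + lnorm N Ω 1 (U n) + (lnorm N Ω p (U n)) ^ p)) :
    ∃ C' : ℝ, ∀ n, Real.sqrt (gform N s (U n) (U n)) ≤ C' := by
  set r := 2 * (N : ℝ) / ((N : ℝ) - 2 * s)
  have hq : 0 < q := lt_of_le_of_lt (div_nonneg (mul_nonneg (by linarith) (by linarith [hs.1]))
    (by linarith [hs.1])) hqlo
  obtain ⟨S₁, -, hemb₁⟩ := hemb 1 le_rfl (by linarith)
  obtain ⟨S, hS, hembr⟩ := hemb r (by linarith) le_rfl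
  set a := q * (r - p) / (r - q)
  set b := r * (p - q) / (r - q)
  have hb : b < 2 := interpolation_exponent_lt_two hs.1 hNs hqlo (hqp.trans hpc)
  obtain ⟨M, hM⟩ := exists_bound_of_sq_le hb C (C * S₁) (C * C ^ a * S ^ b)
  refine ⟨M, fun n => hM _ (Real.sqrt_nonneg _) ?_⟩
  set X := √(gform N s (U n) (U n))
  have hΩ' : volume Ω ≠ ∞ := hΩ.measure_lt_top.ne
  have : IsFiniteMeasure (volume.restrict Ω) := isFiniteMeasure_restrict.2 hΩ'
  have hu := (hU n).1.1.restrict (s := Ω)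
  have hLr := lintegral_enorm_rpow_le_of_embedding hΩ' (by linarith) hS.le hembr (hU n)
  have hLq' := lintegral_enorm_rpow_le_of_lnorm_le hu hq (lintegral_rpow_ne_top_of_le hq.le
    (hqp.trans hpc).le (ne_top_of_le_ne_top ENNReal.ofReal_ne_top hLr)) (hLq n)
  have hLp := lnorm_rpow_le_interpolate hu hq hqp hpc hC.le (by positivity) hLq' hLr
  rw [Real.sq_sqrt gform_self_nonneg]
  calc gform N s (U n) (U n) ≤ C * (1 + lnorm N Ω 1 (U n) + lnorm N Ω p (U n) ^ p) := hkey n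
    _ ≤ C * (1 + S₁ * X + C ^ a * (S * X) ^ b) := by gcongr; exact hemb₁ _ (hU n)
    _ = C + C * S₁ * X + C * C ^ a * S ^ b * X ^ b := by
        rw [Real.mul_rpow hS.le (Real.sqrt_nonneg _)]; ring

/-- If `(uₙ) ⊆ H^s_0(Ω)` is bounded in `L^q(Ω)` with `(p−2)N/(2s) < q < p < 2*_s` and
satisfies `‖uₙ‖² ≤ C(1 + ‖uₙ‖₁ + ‖uₙ‖_p^p)`, then `(uₙ)` is bounded in `H^s_0(Ω)`. -/
theorem stmt_8 (N : ℕ) (hN : 1 < N) (s : ℝ) (hs : s ∈ Set.Ioo (0 : ℝ) 1)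
    (hNs : 2 * s < (N : ℝ))
    (Ω : Set (EuclideanSpace ℝ (Fin N))) (hΩ : Bornology.IsBounded Ω)
    (hΩm : MeasurableSet Ω)
    (p q : ℝ) (hp2 : 2 < p) (hqlo : (p - 2) * (N : ℝ) / (2 * s) < q) (hqp : q < p)
    (hpc : p < 2 * (N : ℝ) / ((N : ℝ) - 2 * s))
    -- continuous embeddings H^s_0(Ω) ↪ L^r(Ω), 1 ≤ r ≤ 2*_s
    (hemb : ∀ r : ℝ, 1 ≤ r → r ≤ 2 * (N : ℝ) / ((N : ℝ) - 2 * s) →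
      ∃ S > (0 : ℝ), ∀ u : EuclideanSpace ℝ (Fin N) → ℝ, MemHs0 N s Ω u →
        lnorm N Ω r u ≤ S * Real.sqrt (gform N s u u))
    (U : ℕ → EuclideanSpace ℝ (Fin N) → ℝ) (hU : ∀ n, MemHs0 N s Ω (U n))
    (C : ℝ) (hC : 0 < C)
    -- (uₙ) bounded in L^q(Ω)
    (hLq : ∀ n, lnorm N Ω q (U n) ≤ C)
    -- ‖uₙ‖² ≤ C(1 + ‖uₙ‖₁ + ‖uₙ‖_p^p)
    (hkey : ∀ n, gform N s (U n) (U n) ≤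
      C * (1 + lnorm N Ω 1 (U n) + (lnorm N Ω p (U n)) ^ p)) :
    ∃ C' : ℝ, ∀ n, Real.sqrt (gform N s (U n) (U n)) ≤ C' :=
  stmt_8_general N s hs hNs Ω hΩ p q hp2 hqlo hqp hpc hemb U hU C hC hLq hkey
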